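/- arXiv:1403.4494 — 4 statements merged into one kernel-verified Lean document; each statement's English description precedes it below -/
import Mathlib

section
/- For x < 0, the derivative of φ₁(x) = -1 + (1-2x)·ln(1-2x) + 2x·ln(-2x) equals 2·ln(-2x/(1-2x)), which is strictly negative; consequently the function J_H(s) = φ(s - s_c) - φ(-s_c) is concave on (-∞, s_c). -/
/-! Writing `g t = t log t` and `h t = t² log t`, one has `φ₁ x = -1 + g (1 - 2x) - g (-2x)` and
`φ x = -(3/2) x + h (-2x) / 4 - h (1 - 2x) / 4`, so the chain rule with `g' = log + 1` and
`h' = 2 g + id` gives `φ' = φ₁` and `φ₁' x = 2 log (-2x / (1 - 2x))`. The last quotient lies in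
`(0, 1)`, so `φ'' < 0` on `(-∞, 0)`; `J_H` is a translate of `φ` plus a constant. -/

open Real Set

noncomputable def phi (x : ℝ) : ℝ :=
  -(3/2) * x + x^2 * Real.log (-2 * x) - (1 - 2*x)^2 / 4 * Real.log (1 - 2*x)

noncomputable def phi1 (x : ℝ) : ℝ :=
  -1 + (1 - 2*x) * Real.log (1 - 2*x) + 2*x * Real.log (-2 * x)

lemma log_neg_two_mul_div_one_sub_two_mul_neg {x : ℝ} (hx : x < 0) :
    log (-2 * x / (1 - 2 * x)) < 0 :=
  log_neg (div_pos (by linarith) (by linarith)) ((div_lt_one (by linarith)).2 (by linarith))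

lemma hasDerivAt_sq_mul_log {t : ℝ} (ht : t ≠ 0) :
    HasDerivAt (fun t => t ^ 2 * log t) (2 * (t * log t) + t) t := by
  refine ((hasDerivAt_pow 2 t).mul (hasDerivAt_log ht)).congr_deriv ?_
  field_simp
  ring

lemma hasDerivAt_phi {x : ℝ} (hx : x < 0) : HasDerivAt phi (phi1 x) x := by
  have hv := (hasDerivAt_sq_mul_log (t := -2 * x) (by linarith)).comp x
    ((hasDerivAt_id x).const_mul (-2))
  have hu := (hasDerivAt_sq_mul_log (t := 1 - 2 * x) (by linarith)).comp x
    (((hasDerivAt_id x).const_mul 2).const_sub 1)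
  refine ((((hasDerivAt_id x).const_mul (-(3 / 2))).add (hv.div_const 4)).sub
    (hu.div_const 4)).congr_deriv ?_ |>.congr_of_eventuallyEq (.of_forall fun y => ?_)
  · simp only [phi1]
    ring
  · simp only [phi, Function.comp_apply, id, Pi.add_apply, Pi.sub_apply]
    ring

lemma hasDerivAt_phi1 {x : ℝ} (hx : x < 0) :
    HasDerivAt phi1 (2 * log (-2 * x / (1 - 2 * x))) x := by
  have hu := (Real.hasDerivAt_mul_log (x := 1 - 2 * x) (by linarith)).comp x
    (((hasDerivAt_id x).const_mul 2).const_sub 1)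
  have hv := (Real.hasDerivAt_mul_log (x := -2 * x) (by linarith)).comp x
    ((hasDerivAt_id x).const_mul (-2))
  refine ((hu.sub hv).const_add (-1)).congr_deriv ?_ |>.congr_of_eventuallyEq
    (.of_forall fun y => ?_)
  · rw [log_div (by linarith) (by linarith)]
    ring
  · simp only [phi1, Pi.sub_apply, Function.comp_apply, id]
    ring

lemma concaveOn_phi : ConcaveOn ℝ (Iio 0) phi := by
  refine concaveOn_of_hasDerivWithinAt2_nonpos (f' := phi1)
    (f'' := fun x => 2 * log (-2 * x / (1 - 2 * x))) (convex_Iio 0)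
    (fun x hx => (hasDerivAt_phi hx).continuousAt.continuousWithinAt) ?_ ?_ ?_ <;>
    rw [interior_Iio]
  · exact fun x hx => (hasDerivAt_phi hx).hasDerivWithinAt
  · exact fun x hx => (hasDerivAt_phi1 hx).hasDerivWithinAt
  · intro x hx
    linarith [log_neg_two_mul_div_one_sub_two_mul_neg (mem_Iio.1 hx)]

theorem phi1_deriv_neg_and_JH_concave_general (c : ℝ) :
    (∀ x : ℝ, x < 0 →
      HasDerivAt phi1 (2 * Real.log (-2 * x / (1 - 2*x))) x ∧
      2 * Real.log (-2 * x / (1 - 2*x)) < 0) ∧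
    ConcaveOn ℝ (Set.Iio ((c - 1) / 2))
      (fun s => phi (s - (c - 1) / 2) - phi (-((c - 1) / 2))) := by
  refine ⟨fun x hx => ⟨hasDerivAt_phi1 hx, by
    linarith [log_neg_two_mul_div_one_sub_two_mul_neg hx]⟩, ?_⟩
  have hshift :=
    (concaveOn_phi.translate_left (-((c - 1) / 2))).add_const (-phi (-((c - 1) / 2)))
  rw [preimage_const_add_Iio, zero_sub, neg_neg] at hshift
  refine hshift.congr fun s _ => ?_
  simp only [Pi.add_apply, Function.comp_apply, sub_eq_add_neg]

theorem phi1_deriv_neg_and_JH_concave (c : ℝ) (hc : 1 < c) :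
    (∀ x : ℝ, x < 0 →
      HasDerivAt phi1 (2 * Real.log (-2 * x / (1 - 2*x))) x ∧
      2 * Real.log (-2 * x / (1 - 2*x)) < 0) ∧
    ConcaveOn ℝ (Set.Iio ((c - 1) / 2))
      (fun s => phi (s - (c - 1) / 2) - phi (-((c - 1) / 2))) :=
  phi1_deriv_neg_and_JH_concave_general c
end

section
/- With the same density ρ(λ) = (1+2w)/(2πλ)·√((λ-λ₋)(λ₊-λ)) on (λ₋,λ₊), where λ_± = (1 ± √(1-2(s-s_c)))²/(1+2w), one has ∫_{λ₋}^{λ₊} λ·ρ(λ) dλ = (c - 2s)/(1+2w). -/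
/-!
Off the null set `{0}` the factor `λ` cancels the `1 / λ` of the density, so the first moment is
`(1 + 2w) / (2π)` times the area `π (λ₊ - λ₋)² / 8` of a half-disc of diameter `λ₊ - λ₋`.
Since `λ₊ - λ₋ = 4 √(c - 2s) / (1 + 2w)`, this equals `(c - 2s) / (1 + 2w)`.
-/

open Real intervalIntegral
open scoped Interval

theorem integral_sqrt_sub_mul_sub {a b : ℝ} (hab : a ≤ b) :
    ∫ x in a..b, √((x - a) * (b - x)) = π * (b - a) ^ 2 / 8 := by
  rcases hab.eq_or_lt with rfl | hab
  · simp
  set r : ℝ := (b - a) / 2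
  have hr : 0 < r := by positivity
  -- the affine map `x ↦ (x - (a + b) / 2) / r` sends `[a, b]` onto `[-1, 1]`
  have hsubst := integral_comp_mul_add (a := a) (b := b)
    (fun x => √(1 - x ^ 2)) (inv_ne_zero hr.ne') (-((a + b) / 2) / r)
  have ha : r⁻¹ * a + -((a + b) / 2) / r = -1 := by field_simp; ring
  have hb : r⁻¹ * b + -((a + b) / 2) / r = 1 := by field_simp; ring
  have hscale : ∀ x : ℝ, √(1 - (r⁻¹ * x + -((a + b) / 2) / r) ^ 2)
      = √((x - a) * (b - x)) * r⁻¹ := by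
    intro x
    have hsq : 1 - (r⁻¹ * x + -((a + b) / 2) / r) ^ 2 = (x - a) * (b - x) * r⁻¹ ^ 2 := by
      field_simp
      ring
    rw [hsq, sqrt_mul' _ (sq_nonneg _), sqrt_sq (inv_pos.2 hr).le]
  simp only [ha, hb, hscale, integral_sqrt_one_sub_sq, integral_mul_const, inv_inv,
    smul_eq_mul] at hsubst
  have hint : ∫ x in a..b, √((x - a) * (b - x)) = r * (r * (π / 2)) := by
    field_simp at hsubst ⊢
    linarith
  rw [hint]
  ring

theorem integral_mul_div_mul_self_mul_sqrt {a b : ℝ} (hab : a ≤ b) (k : ℝ) :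
    ∫ x in a..b, x * (k / (2 * π * x) * √((x - a) * (b - x))) = k * (b - a) ^ 2 / 16 := by
  have hcancel : ∀ᵐ x, x ∈ Ι a b →
      x * (k / (2 * π * x) * √((x - a) * (b - x))) = k / (2 * π) * √((x - a) * (b - x)) := by
    filter_upwards [MeasureTheory.Measure.ae_ne _ 0] with x hx _
    field_simp
  rw [integral_congr_ae hcancel, integral_const_mul, integral_sqrt_sub_mul_sub hab]
  field_simp
  ring

theorem tilted_MP_first_moment_general (c : ℝ) (s w : ℝ)
    (hs : s < (c - 1) / 2) (hw : -1/2 < w) :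
    (∫ l in ((1 - Real.sqrt (1 - 2 * (s - (c - 1) / 2)))^2 / (1 + 2*w))..(
        (1 + Real.sqrt (1 - 2 * (s - (c - 1) / 2)))^2 / (1 + 2*w)),
      l * ((1 + 2*w) / (2 * Real.pi * l) *
        Real.sqrt ((l - (1 - Real.sqrt (1 - 2 * (s - (c - 1) / 2)))^2 / (1 + 2*w)) *
          ((1 + Real.sqrt (1 - 2 * (s - (c - 1) / 2)))^2 / (1 + 2*w) - l))))
      = (c - 2 * s) / (1 + 2 * w) := by
  have hk : 0 < 1 + 2 * w := by linarith
  have hD : 1 - 2 * (s - (c - 1) / 2) = c - 2 * s := by ring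
  rw [hD]
  have hd : 0 ≤ √(c - 2 * s) := sqrt_nonneg _
  have hedges : (1 - √(c - 2 * s)) ^ 2 / (1 + 2 * w) ≤ (1 + √(c - 2 * s)) ^ 2 / (1 + 2 * w) :=
    div_le_div_of_nonneg_right (by nlinarith) hk.le
  rw [integral_mul_div_mul_self_mul_sqrt hedges]
  have hsq : √(c - 2 * s) ^ 2 = c - 2 * s := sq_sqrt (by linarith)
  field_simp
  linear_combination 16 * hsq

theorem tilted_MP_first_moment (c : ℝ) (hc : 1 ≤ c) (s w : ℝ)
    (hs : s < (c - 1) / 2) (hw : -1/2 < w) :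
    (∫ l in ((1 - Real.sqrt (1 - 2 * (s - (c - 1) / 2)))^2 / (1 + 2*w))..(
        (1 + Real.sqrt (1 - 2 * (s - (c - 1) / 2)))^2 / (1 + 2*w)),
      l * ((1 + 2*w) / (2 * Real.pi * l) *
        Real.sqrt ((l - (1 - Real.sqrt (1 - 2 * (s - (c - 1) / 2)))^2 / (1 + 2*w)) *
          ((1 + Real.sqrt (1 - 2 * (s - (c - 1) / 2)))^2 / (1 + 2*w) - l))))
      = (c - 2 * s) / (1 + 2 * w) :=
  tilted_MP_first_moment_general c s w hs hw
end

section
/- For c > 1, let a = (1-√c)² and b = (1+√c)². Then (1/(2π)) ∫_a^b (ln λ)·√((b-λ)(λ-a))/λ dλ = -1 + c·ln c - (c-1)·ln(c-1). -/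
/-!
Substituting `λ = 1 + c + 2√c cos θ = c · |1 + t e^{iθ}|²` with `t = 1/√c < 1` turns the
Marchenko–Pastur weight into `4c sin² θ` and the integral into
`∫₀^π (log c + log (1 + 2t cos θ + t²)) · 4 sin² θ / (1 + 2t cos θ + t²) dθ`.
Against this weight `log c` integrates to `2π log c`, since
`∫₀^π sin² θ / |1 + t e^{iθ}|² dθ = π/2`.
For the other term, replace `t` by `s` inside the logarithm only: at `s = 0` the integral
vanishes, and its `s`-derivative is a rational integral that partial fractions reduce to the
same `π/2` identity. Integrating that derivative from `0` to `t` gives the closed form.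
-/

open Real intervalIntegral Set
open MeasureTheory (volume)

namespace MarchenkoPastur

noncomputable def cosQuad (r θ : ℝ) : ℝ := 1 + 2 * r * cos θ + r ^ 2

lemma continuous_cosQuad (r : ℝ) : Continuous (cosQuad r) := by
  unfold cosQuad; fun_prop

lemma sq_one_sub_abs_le_cosQuad (r θ : ℝ) : (1 - |r|) ^ 2 ≤ cosQuad r θ := by
  have h : |r * cos θ| ≤ |r| := by
    rw [abs_mul]; exact mul_le_of_le_one_right (abs_nonneg r) (abs_cos_le_one θ)
  unfold cosQuad
  nlinarith [sq_abs r, neg_abs_le (r * cos θ)]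

lemma cosQuad_pos {r : ℝ} (hr : |r| < 1) (θ : ℝ) : 0 < cosQuad r θ :=
  (pow_pos (by linarith) 2).trans_le (sq_one_sub_abs_le_cosQuad r θ)

lemma cosQuad_eq_sq_mul_inv {r : ℝ} (hr : r ≠ 0) (θ : ℝ) :
    cosQuad r θ = r ^ 2 * cosQuad r⁻¹ θ := by
  unfold cosQuad; field_simp; ring

lemma hasDerivAt_cosQuad_param (r θ : ℝ) :
    HasDerivAt (fun s => cosQuad s θ) (2 * cos θ + 2 * r) r := by
  refine ((((hasDerivAt_id r).const_mul 2).mul_const (cos θ)).const_add 1).add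
    (hasDerivAt_pow 2 r) |>.congr_deriv ?_
  norm_num

lemma hasDerivAt_arctan_sin_div {r : ℝ} (hr : |r| < 1) (θ : ℝ) :
    HasDerivAt (fun θ => arctan (r * sin θ / (1 + r * cos θ)))
      (r * (cos θ + r) / cosQuad r θ) θ := by
  have hden : 1 + r * cos θ ≠ 0 := by
    have : |r * cos θ| < 1 := by
      rw [abs_mul]
      exact (mul_le_of_le_one_right (abs_nonneg r) (abs_cos_le_one θ)).trans_lt hr
    nlinarith [neg_abs_le (r * cos θ)]
  refine (((hasDerivAt_sin θ).const_mul r).div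
    (((hasDerivAt_cos θ).const_mul r).const_add 1) hden).arctan.congr_deriv ?_
  have hsq : 1 + (r * sin θ / (1 + r * cos θ)) ^ 2 = cosQuad r θ / (1 + r * cos θ) ^ 2 := by
    unfold cosQuad
    field_simp
    linear_combination r ^ 2 * sin_sq_add_cos_sq θ
  simp only [Pi.div_apply, hsq]
  have hU := (cosQuad_pos hr θ).ne'
  field_simp
  linear_combination r ^ 2 * sin_sq_add_cos_sq θ

lemma integral_sin_sq_div_cosQuad {r : ℝ} (hr : |r| < 1) :
    ∫ θ in (0 : ℝ)..π, sin θ ^ 2 / cosQuad r θ = π / 2 := by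
  rcases eq_or_ne r 0 with rfl | hr0
  · simp [cosQuad, integral_sin_sq]
  have hU θ := (cosQuad_pos hr θ).ne'
  have hderiv θ : HasDerivAt (fun θ => θ / 2 - sin θ / (2 * r)
      + (1 - r ^ 2) / (2 * r ^ 2) * arctan (r * sin θ / (1 + r * cos θ)))
      (sin θ ^ 2 / cosQuad r θ) θ := by
    refine ((((hasDerivAt_id θ).div_const 2).sub ((hasDerivAt_sin θ).div_const (2 * r))).add
      ((hasDerivAt_arctan_sin_div hr θ).const_mul _)).congr_deriv ?_
    have := hU θ
    field_simp
    unfold cosQuad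
    linear_combination (-2 * r) * sin_sq_add_cos_sq θ
  rw [integral_eq_sub_of_hasDerivAt (fun θ _ => hderiv θ)
    (((continuous_sin.pow 2).div (continuous_cosQuad r) hU).intervalIntegrable _ _)]
  simp

lemma hasDerivAt_integral_log_cosQuad_mul {w : ℝ → ℝ} {a b r : ℝ}
    (hw : IntervalIntegrable w volume a b) (hr : |r| < 1) :
    HasDerivAt (fun s => ∫ θ in a..b, log (cosQuad s θ) * w θ)
      (∫ θ in a..b, (2 * cos θ + 2 * r) / cosQuad r θ * w θ) r := by
  set ε := (1 - |r|) / 2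
  have hε : 0 < ε := by simp only [ε]; linarith
  have hball {s} (hs : s ∈ Metric.ball r ε) : |s| ≤ 1 - ε := by
    have := abs_sub_abs_le_abs_sub s r
    rw [Metric.mem_ball, Real.dist_eq] at hs
    simp only [ε] at hs ⊢; linarith
  have hlower {s} (hs : s ∈ Metric.ball r ε) (θ : ℝ) : ε ^ 2 ≤ cosQuad s θ := by
    simpa using (sq_one_sub_abs_le_cosQuad s θ).trans' (pow_le_pow_left₀ hε.le
      (by linarith [hball hs]) 2)
  have hU {s} (hs : s ∈ Metric.ball r ε) (θ : ℝ) : 0 < cosQuad s θ :=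
    (pow_pos hε 2).trans_le (hlower hs θ)
  have hr_mem : r ∈ Metric.ball r ε := Metric.mem_ball_self hε
  refine (hasDerivAt_integral_of_dominated_loc_of_deriv_le (μ := volume)
    (F := fun s θ => log (cosQuad s θ) * w θ)
    (F' := fun s θ => (2 * cos θ + 2 * s) / cosQuad s θ * w θ)
    (bound := fun θ => 4 / ε ^ 2 * ‖w θ‖)
    (Metric.ball_mem_nhds r hε)
    (.of_forall fun s => (measurable_log.comp (continuous_cosQuad s).measurable
      ).aestronglyMeasurable.mul hw.def'.aestronglyMeasurable) ?_ ?_ ?_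
    (hw.norm.const_mul _) ?_).2
  · exact hw.continuousOn_mul
      ((continuous_cosQuad r).log fun θ => (hU hr_mem θ).ne').continuousOn
  · exact ((by fun_prop : Continuous fun θ => 2 * cos θ + 2 * r).div (continuous_cosQuad r)
      fun θ => (hU hr_mem θ).ne').aestronglyMeasurable.mul hw.def'.aestronglyMeasurable
  · refine .of_forall fun θ _ s hs => ?_
    have hnum : |2 * cos θ + 2 * s| ≤ 4 := by
      have := abs_cos_le_one θ
      have := hball hs
      calc |2 * cos θ + 2 * s| ≤ 2 * |cos θ| + 2 * |s| := by
            simpa [abs_mul] using abs_add_le (2 * cos θ) (2 * s)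
        _ ≤ 4 := by linarith
    rw [norm_mul, Real.norm_eq_abs, abs_div, abs_of_pos (hU hs θ)]
    gcongr
    exact hlower hs θ
  · exact .of_forall fun θ _ s hs =>
      ((hasDerivAt_cosQuad_param s θ).log (hU hs θ).ne').mul_const (w θ)

lemma integral_deriv_log_cosQuad_mul_sin_sq_div {s t : ℝ} (hs : |s| < 1) (ht : |t| < 1)
    (hst : s ≠ t) :
    ∫ θ in (0 : ℝ)..π, (2 * cos θ + 2 * s) / cosQuad s θ * (sin θ ^ 2 / cosQuad t θ)
      = π / 2 * (s - t) / (1 - s * t) := by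
  have hst' : 1 - s * t ≠ 0 := by
    have : s * t < 1 := (le_abs_self _).trans_lt <| by
      rw [abs_mul]; exact mul_lt_one_of_nonneg_of_lt_one_left (abs_nonneg s) hs ht.le
    linarith
  have hts : t - s ≠ 0 := sub_ne_zero.mpr hst.symm
  have hUs θ := (cosQuad_pos hs θ).ne'
  have hUt θ := (cosQuad_pos ht θ).ne'
  -- partial fractions, from `t * cosQuad s θ - s * cosQuad t θ = (t - s) * (1 - s * t)`
  have hsplit : ∀ θ ∈ uIcc 0 π,
      (2 * cos θ + 2 * s) / cosQuad s θ * (sin θ ^ 2 / cosQuad t θ)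
        = (1 - s ^ 2) / ((t - s) * (1 - s * t)) * (sin θ ^ 2 / cosQuad s θ)
          - (1 + t ^ 2 - 2 * s * t) / ((t - s) * (1 - s * t)) * (sin θ ^ 2 / cosQuad t θ) := by
    intro θ _
    have := hUs θ
    have := hUt θ
    field_simp
    unfold cosQuad
    ring
  have hint {r} (hr : |r| < 1) :
      IntervalIntegrable (fun θ => sin θ ^ 2 / cosQuad r θ) volume 0 π :=
    ((continuous_sin.pow 2).div (continuous_cosQuad r) fun θ =>
      (cosQuad_pos hr θ).ne').intervalIntegrable _ _
  rw [integral_congr hsplit, integral_sub ((hint hs).const_mul _) ((hint ht).const_mul _),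
    integral_const_mul, integral_const_mul, integral_sin_sq_div_cosQuad hs,
    integral_sin_sq_div_cosQuad ht]
  field_simp
  ring

lemma integral_log_cosQuad_mul_sin_sq_div {t : ℝ} (ht0 : 0 < t) (ht1 : t < 1) :
    ∫ θ in (0 : ℝ)..π, log (cosQuad t θ) * (sin θ ^ 2 / cosQuad t θ)
      = -(π / 2) * (1 + (1 - t ^ 2) / t ^ 2 * log (1 - t ^ 2)) := by
  have habs {s} (hs : s ∈ Icc 0 t) : |s| < 1 := by rw [abs_of_nonneg hs.1]; linarith [hs.2]
  have hst {s} (hs : s ∈ Icc 0 t) : 0 < 1 - s * t := by nlinarith [hs.1, hs.2]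
  set m : ℝ → ℝ := fun s =>
    ∫ θ in (0 : ℝ)..π, log (cosQuad s θ) * (sin θ ^ 2 / cosQuad t θ)
  set G : ℝ → ℝ := fun s => -(π / 2) * (s / t + (1 - t ^ 2) / t ^ 2 * log (1 - s * t))
  have hm s (hs : s ∈ Icc 0 t) := hasDerivAt_integral_log_cosQuad_mul
    (w := fun θ => sin θ ^ 2 / cosQuad t θ)
    (((continuous_sin.pow 2).div (continuous_cosQuad t) fun θ =>
      (cosQuad_pos (habs ⟨ht0.le, le_rfl⟩) θ).ne').intervalIntegrable 0 π) (habs hs)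
  have hG s (hs : s ∈ Icc 0 t) : HasDerivAt G (π / 2 * (s - t) / (1 - s * t)) s := by
    have hlog := (((hasDerivAt_id s).mul_const t).const_sub 1).log (hst hs).ne'
    refine ((((hasDerivAt_id s).div_const t).add (hlog.const_mul ((1 - t ^ 2) / t ^ 2))
      ).const_mul (-(π / 2))).congr_deriv ?_
    have : 1 - t * s ≠ 0 := by rw [mul_comm]; exact (hst hs).ne'
    simp only [id]
    field_simp
    ring
  have hderiv s (hs : s ∈ Ico 0 t) : HasDerivAt m (π / 2 * (s - t) / (1 - s * t)) s := by
    have := hm s (Ico_subset_Icc_self hs)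
    rwa [integral_deriv_log_cosQuad_mul_sin_sq_div (habs (Ico_subset_Icc_self hs))
      (habs ⟨ht0.le, le_rfl⟩) hs.2.ne] at this
  have hm0 : m 0 = 0 := by simp [m, cosQuad]
  have hG0 : G 0 = 0 := by simp [G]
  have := eq_of_has_deriv_right_eq (fun s hs => (hderiv s hs).hasDerivWithinAt)
    (fun s hs => (hG s (Ico_subset_Icc_self hs)).hasDerivWithinAt)
    (fun s hs => (hm s hs).continuousAt.continuousWithinAt)
    (fun s hs => (hG s hs).continuousAt.continuousWithinAt) (hm0.trans hG0.symm) t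
    ⟨ht0.le, le_rfl⟩
  simp only [m, G] at this
  rw [this, div_self ht0.ne', sq]

lemma cosQuad_mem_Icc {q : ℝ} (hq : 0 ≤ q) (θ : ℝ) :
    cosQuad q θ ∈ Icc ((1 - q) ^ 2) ((1 + q) ^ 2) := by
  constructor <;> unfold cosQuad <;> nlinarith [neg_one_le_cos θ, cos_le_one θ]

lemma integral_mul_sqrt_eq_integral_comp_cosQuad {q : ℝ} (hq : 0 ≤ q) {f : ℝ → ℝ}
    (hf : ContinuousOn f (Icc ((1 - q) ^ 2) ((1 + q) ^ 2))) :
    ∫ l in (1 - q) ^ 2..(1 + q) ^ 2, f l * √(((1 + q) ^ 2 - l) * (l - (1 - q) ^ 2))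
      = ∫ θ in (0 : ℝ)..π, f (cosQuad q θ) * (2 * q * sin θ) ^ 2 := by
  have hderiv : ∀ θ ∈ uIcc π 0, HasDerivAt (cosQuad q) (-(2 * q * sin θ)) θ := fun θ _ =>
    ((((hasDerivAt_cos θ).const_mul (2 * q)).const_add 1).add_const (q ^ 2)).congr_deriv
      (by ring)
  have hsubst := integral_deriv_smul_comp'
    (g := fun l => f l * √(((1 + q) ^ 2 - l) * (l - (1 - q) ^ 2))) hderiv (by fun_prop)
    ((hf.mul (by fun_prop : Continuous _).continuousOn).mono
      (image_subset_iff.mpr fun θ _ => cosQuad_mem_Icc hq θ))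
  have hπ : cosQuad q π = (1 - q) ^ 2 := by simp [cosQuad]; ring
  have h0 : cosQuad q 0 = (1 + q) ^ 2 := by simp [cosQuad]; ring
  rw [hπ, h0] at hsubst
  rw [← hsubst, integral_symm, ← integral_neg]
  refine integral_congr fun θ hθ => ?_
  rw [uIcc_of_le pi_pos.le] at hθ
  have hsin := sin_nonneg_of_nonneg_of_le_pi hθ.1 hθ.2
  have hprod :
      ((1 + q) ^ 2 - cosQuad q θ) * (cosQuad q θ - (1 - q) ^ 2) = (2 * q * sin θ) ^ 2 := by
    unfold cosQuad
    linear_combination (-4 * q ^ 2) * sin_sq_add_cos_sq θ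
  simp only [Function.comp_apply, smul_eq_mul, hprod,
    sqrt_sq (by positivity : 0 ≤ 2 * q * sin θ)]
  ring

lemma integral_log_cosQuad_div_mul_sq_sin {q : ℝ} (hq : 1 < q) :
    ∫ θ in (0 : ℝ)..π, log (cosQuad q θ) / cosQuad q θ * (2 * q * sin θ) ^ 2
      = 2 * π * (log (q ^ 2) - 1 - (q ^ 2 - 1) * log (1 - (q ^ 2)⁻¹)) := by
  have ht0 : 0 < q⁻¹ := by positivity
  have ht1 : q⁻¹ < 1 := inv_lt_one_of_one_lt₀ hq
  have ht : |q⁻¹| < 1 := by rwa [abs_of_pos ht0]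
  have hU θ := (cosQuad_pos ht θ).ne'
  have hsplit θ : log (cosQuad q θ) / cosQuad q θ * (2 * q * sin θ) ^ 2
      = 4 * log (q ^ 2) * (sin θ ^ 2 / cosQuad q⁻¹ θ)
        + 4 * (log (cosQuad q⁻¹ θ) * (sin θ ^ 2 / cosQuad q⁻¹ θ)) := by
    rw [cosQuad_eq_sq_mul_inv (by positivity : q ≠ 0), log_mul (by positivity) (hU θ)]
    field_simp
    ring
  have hint {g : ℝ → ℝ} (hg : Continuous g) :
      IntervalIntegrable (fun θ => g θ * (sin θ ^ 2 / cosQuad q⁻¹ θ)) volume 0 π :=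
    (hg.mul ((continuous_sin.pow 2).div (continuous_cosQuad _) hU)).intervalIntegrable _ _
  rw [integral_congr fun θ _ => hsplit θ,
    integral_add (hint continuous_const) ((hint ((continuous_cosQuad _).log hU)).const_mul 4),
    integral_const_mul, integral_const_mul, integral_sin_sq_div_cosQuad ht,
    integral_log_cosQuad_mul_sin_sq_div ht0 ht1, inv_pow]
  field_simp
  ring

end MarchenkoPastur

open MarchenkoPastur in
theorem MP_log_moment (c : ℝ) (hc : 1 < c) :
    (1 / (2 * Real.pi)) * ∫ l in ((1 - Real.sqrt c)^2)..((1 + Real.sqrt c)^2),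
        Real.log l * Real.sqrt (((1 + Real.sqrt c)^2 - l) * (l - (1 - Real.sqrt c)^2)) / l
      = -1 + c * Real.log c - (c - 1) * Real.log (c - 1) := by
  have hq : 1 < √c := by simpa using sqrt_lt_sqrt zero_le_one hc
  have hf : ContinuousOn (fun l => log l / l) (Icc ((1 - √c) ^ 2) ((1 + √c) ^ 2)) := by
    have hne : ∀ l ∈ Icc ((1 - √c) ^ 2) ((1 + √c) ^ 2), l ≠ 0 := fun l hl =>
      ((by nlinarith : 0 < (1 - √c) ^ 2).trans_le hl.1).ne'
    exact (continuousOn_log.mono hne).div continuousOn_id hne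
  have hlog : log (1 - c⁻¹) = log (c - 1) - log c := by
    rw [← log_div (by linarith) (by linarith), sub_div, div_self (by linarith), one_div]
  simp only [mul_div_right_comm (log _)]
  rw [integral_mul_sqrt_eq_integral_comp_cosQuad (by positivity) hf,
    integral_log_cosQuad_div_mul_sq_sin hq, sq_sqrt (by linarith), hlog]
  field_simp
  ring
end

section
/- ∫_0^∞ 2t·e^t / ((e^t - 1)(e^t + 1)²) dt = π²/8 - ln 2. -/
/-!
Partial fractions split the integrand as `t eᵗ / (e²ᵗ - 1) - t eᵗ / (eᵗ + 1)²`. Expanding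
`eᵗ / (e²ᵗ - 1) = ∑ₖ e^{-(2k+1)t}` and integrating termwise turns the first part into
`∑ₖ 1 / (2k+1)² = π² / 8`; the second part has the elementary antiderivative
`-t / (eᵗ + 1) - log (1 + e⁻ᵗ)` and integrates to `log 2`.
-/

open Real MeasureTheory Filter Set Topology

lemma integral_mul_exp_neg_mul_Ioi {c : ℝ} (hc : 0 < c) :
    ∫ t in Ioi (0 : ℝ), t * exp (-(c * t)) = 1 / c ^ 2 := by
  have h := integral_rpow_mul_exp_neg_mul_Ioi two_pos hc
  norm_num [Gamma_two] at h
  rw [h, one_div]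

lemma hasSum_one_div_odd_sq :
    HasSum (fun k : ℕ => 1 / (2 * (k : ℝ) + 1) ^ 2) (π ^ 2 / 8) := by
  set f : ℕ → ℝ := fun n => 1 / (n : ℝ) ^ 2
  obtain ⟨s, hs⟩ : Summable fun k => f (2 * k + 1) :=
    hasSum_zeta_two.summable.comp_injective fun a b hab => by simp_all
  have heven : HasSum (fun k => f (2 * k)) (π ^ 2 / 6 / 4) := by
    refine (hasSum_zeta_two.div_const 4).congr_fun fun k => ?_
    simp only [f]
    push_cast
    ring
  have : π ^ 2 / 6 / 4 + s = π ^ 2 / 6 := (heven.even_add_odd hs).unique hasSum_zeta_two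
  obtain rfl : s = π ^ 2 / 8 := by linarith
  simpa [f] using hs

lemma hasSum_exp_neg_odd_mul {t : ℝ} (ht : 0 < t) :
    HasSum (fun k : ℕ => exp (-((2 * k + 1) * t))) (exp t / (exp (2 * t) - 1)) := by
  have h1 : 1 < exp t := one_lt_exp_iff.mpr ht
  have he : exp (2 * t) = exp t ^ 2 := by rw [← exp_nat_mul]; norm_num
  have hq : exp (-(2 * t)) < 1 := exp_lt_one_iff.mpr (by linarith)
  have h := (hasSum_geometric_of_lt_one (exp_nonneg _) hq).mul_left (exp (-t))
  rw [show exp (-t) * (1 - exp (-(2 * t)))⁻¹ = exp t / (exp (2 * t) - 1) by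
    rw [exp_neg, exp_neg, he]; field_simp] at h
  refine h.congr_fun fun k => ?_
  rw [← exp_nat_mul, ← exp_add]
  ring_nf

lemma integral_mul_exp_div_exp_two_mul_sub_one :
    ∫ t in Ioi (0 : ℝ), t * exp t / (exp (2 * t) - 1) = π ^ 2 / 8 := by
  set F : ℕ → ℝ → ℝ := fun k t => t * exp (-((2 * k + 1) * t))
  have hF : ∀ k : ℕ, ∫ t in Ioi (0 : ℝ), F k t = 1 / (2 * (k : ℝ) + 1) ^ 2 :=
    fun k => integral_mul_exp_neg_mul_Ioi (by positivity)
  have hF_norm : ∀ k : ℕ, ∫ t in Ioi (0 : ℝ), ‖F k t‖ = 1 / (2 * (k : ℝ) + 1) ^ 2 := by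
    intro k
    rw [← hF k]
    refine setIntegral_congr_fun measurableSet_Ioi fun t ht => ?_
    exact norm_of_nonneg (mul_nonneg (le_of_lt ht) (exp_nonneg _))
  -- A non-integrable function has integral `0`, so a nonzero value certifies integrability.
  have hF_int : ∀ k, IntegrableOn (F k) (Ioi 0) := fun k =>
    Integrable.of_integral_ne_zero (by rw [hF k]; positivity)
  have hsum := hasSum_integral_of_summable_integral_norm hF_int
    (by simpa only [hF_norm] using hasSum_one_div_odd_sq.summable)
  simp only [hF] at hsum
  rw [hasSum_one_div_odd_sq.unique hsum]
  refine setIntegral_congr_fun measurableSet_Ioi fun t ht => ?_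
  rw [mul_div_assoc, ← ((hasSum_exp_neg_odd_mul ht).mul_left t).tsum_eq]

lemma hasDerivAt_neg_div_exp_add_one_sub_log (x : ℝ) :
    HasDerivAt (fun t => -(t / (exp t + 1)) - log (1 + exp (-t)))
      (x * exp x / (exp x + 1) ^ 2) x := by
  have hd1 : HasDerivAt (fun t => t / (exp t + 1))
      ((1 * (exp x + 1) - x * exp x) / (exp x + 1) ^ 2) x :=
    (hasDerivAt_id x).div ((hasDerivAt_exp x).add_const 1) (by positivity)
  have hd2 : HasDerivAt (fun t => log (1 + exp (-t))) (exp (-x) * -1 / (1 + exp (-x))) x :=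
    ((hasDerivAt_neg x).exp.const_add 1).log (by positivity)
  refine (hd1.neg.sub hd2).congr_deriv ?_
  rw [exp_neg]
  field_simp
  ring

lemma tendsto_div_exp_add_one_atTop : Tendsto (fun t => t / (exp t + 1)) atTop (𝓝 0) := by
  have h := (tendsto_exp_div_pow_atTop 1).inv_tendsto_atTop
  refine squeeze_zero' ?_ ?_ (by simpa using h)
  · filter_upwards [eventually_ge_atTop 0] with t ht
    positivity
  · filter_upwards [eventually_ge_atTop 0] with t ht
    simp only [Pi.inv_apply, inv_div]
    exact div_le_div_of_nonneg_left ht (exp_pos t) (by linarith)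

lemma integral_mul_exp_div_exp_add_one_sq :
    ∫ t in Ioi (0 : ℝ), t * exp t / (exp t + 1) ^ 2 = log 2 := by
  have hlim : Tendsto (fun t => -(t / (exp t + 1)) - log (1 + exp (-t))) atTop (𝓝 0) := by
    have hlog : Tendsto (fun t => log (1 + exp (-t))) atTop (𝓝 0) := by
      simpa using ((tendsto_exp_neg_atTop_nhds_zero.const_add 1).log (by norm_num))
    simpa using tendsto_div_exp_add_one_atTop.neg.sub hlog
  rw [integral_Ioi_of_hasDerivAt_of_nonneg' (fun x _ => hasDerivAt_neg_div_exp_add_one_sub_log x)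
    (fun t ht => div_nonneg (mul_nonneg (le_of_lt ht) (exp_nonneg t)) (sq_nonneg _)) hlim]
  norm_num

lemma two_mul_div_sub_one_mul_add_one_sq {K : Type*} [Field K] {x : K} (h₁ : x - 1 ≠ 0)
    (h₂ : x + 1 ≠ 0) : 2 * x / ((x - 1) * (x + 1) ^ 2) = x / (x ^ 2 - 1) - x / (x + 1) ^ 2 := by
  have h : x ^ 2 - 1 ≠ 0 := by
    rw [show x ^ 2 - 1 = (x - 1) * (x + 1) by ring]
    exact mul_ne_zero h₁ h₂
  field_simp
  ring

theorem K1_integral :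
    ∫ t in Set.Ioi (0:ℝ),
        2 * t * Real.exp t / ((Real.exp t - 1) * (Real.exp t + 1) ^ 2)
      = Real.pi ^ 2 / 8 - Real.log 2 := by
  have hsplit : ∀ t ∈ Ioi (0 : ℝ),
      2 * t * exp t / ((exp t - 1) * (exp t + 1) ^ 2)
        = t * exp t / (exp (2 * t) - 1) - t * exp t / (exp t + 1) ^ 2 := by
    intro t ht
    have h₁ : exp t - 1 ≠ 0 := sub_ne_zero.2 (one_lt_exp_iff.2 ht).ne'
    have he : exp (2 * t) = exp t ^ 2 := by rw [← exp_nat_mul]; norm_num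
    calc 2 * t * exp t / ((exp t - 1) * (exp t + 1) ^ 2)
        = t * (2 * exp t / ((exp t - 1) * (exp t + 1) ^ 2)) := by ring
      _ = t * (exp t / (exp t ^ 2 - 1) - exp t / (exp t + 1) ^ 2) := by
        rw [two_mul_div_sub_one_mul_add_one_sq h₁ (by positivity)]
      _ = _ := by rw [he]; ring
  have hA : IntegrableOn (fun t => t * exp t / (exp (2 * t) - 1)) (Ioi 0) :=
    Integrable.of_integral_ne_zero (by rw [integral_mul_exp_div_exp_two_mul_sub_one]; positivity)
  have hB : IntegrableOn (fun t => t * exp t / (exp t + 1) ^ 2) (Ioi 0) :=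
    Integrable.of_integral_ne_zero (by rw [integral_mul_exp_div_exp_add_one_sq]; positivity)
  rw [setIntegral_congr_fun measurableSet_Ioi hsplit, integral_sub hA hB,
    integral_mul_exp_div_exp_two_mul_sub_one, integral_mul_exp_div_exp_add_one_sq]
end
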